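/- Let α ≥ 0, β > 0, and b ∈ ℝ^d with b ≠ 0. The maximizer of μ ↦ −(1/(2β))‖μ‖₂² − ⟨μ, b⟩ over the ball {μ : ‖μ‖₂ ≤ α} is μ* = −b · min(α/‖b‖₂, β). -/
import Mathlib


open RealInnerProductSpace

/-- The maximizer of `μ ↦ -(1/(2β))‖μ‖² - ⟪μ, b⟫` over the ball `‖μ‖ ≤ α` is
`μ* = -b · min (α/‖b‖) β`. -/
theorem sdca_update_maximizer (d : ℕ) (α β : ℝ) (hα : 0 ≤ α) (hβ : 0 < β)
    (b : EuclideanSpace ℝ (Fin d)) (hb : b ≠ 0) :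
    (-(min (α / ‖b‖) β) • b) ∈ {μ : EuclideanSpace ℝ (Fin d) | ‖μ‖ ≤ α} ∧
    IsMaxOn (fun μ : EuclideanSpace ℝ (Fin d) => -(1 / (2 * β)) * ‖μ‖ ^ 2 - ⟪μ, b⟫)
      {μ | ‖μ‖ ≤ α} (-(min (α / ‖b‖) β) • b) := by
  have hb' : 0 < ‖b‖ := norm_pos_iff.mpr hb
  set t := min (α / ‖b‖) β with ht
  have ht0 : 0 ≤ t := le_min (div_nonneg hα hb'.le) hβ.le
  have htβ : t ≤ β := min_le_right _ _
  have htα : t * ‖b‖ ≤ α := by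
    calc t * ‖b‖ ≤ (α / ‖b‖) * ‖b‖ := by gcongr; exact min_le_left _ _
    _ = α := div_mul_cancel₀ _ hb'.ne'
  have hmem : ‖(-t) • b‖ ≤ α := by
    rw [norm_smul]
    simpa [abs_of_nonneg ht0] using htα
  refine ⟨hmem, ?_⟩
  intro μ hμ
  simp only [Set.mem_setOf_eq] at hμ ⊢
  have key : ∀ ν : EuclideanSpace ℝ (Fin d),
      -(1 / (2 * β)) * ‖ν‖ ^ 2 - ⟪ν, b⟫ =
      -(1 / (2 * β)) * ‖ν + β • b‖ ^ 2 + β / 2 * ‖b‖ ^ 2 := by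
    intro ν
    rw [norm_add_sq_real, real_inner_smul_right, norm_smul, Real.norm_eq_abs,
      abs_of_nonneg hβ.le]
    field_simp
    ring
  simp only [key]
  have hdist : ‖(-t) • b + β • b‖ ≤ ‖μ + β • b‖ := by
    have heq : (-t) • b + β • b = (β - t) • b := by module
    rw [heq, norm_smul, Real.norm_eq_abs, abs_of_nonneg (by linarith)]
    rcases le_total β (α / ‖b‖) with h | h
    · have hte : t = β := min_eq_right h
      simp [hte]
    · have htv : t = α / ‖b‖ := min_eq_left h
      have h2 : (β - t) * ‖b‖ = β * ‖b‖ - α := by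
        rw [htv]; field_simp
      rw [h2]
      have h1 : ‖β • b‖ ≤ ‖μ + β • b‖ + ‖μ‖ := by
        calc ‖β • b‖ = ‖(μ + β • b) - μ‖ := by congr 1; abel
        _ ≤ ‖μ + β • b‖ + ‖μ‖ := norm_sub_le _ _
      rw [norm_smul, Real.norm_eq_abs, abs_of_nonneg hβ.le] at h1
      linarith
  have hsq : ‖(-t) • b + β • b‖ ^ 2 ≤ ‖μ + β • b‖ ^ 2 := by
    gcongr
  have hc : -(1 / (2 * β)) * ‖μ + β • b‖ ^ 2 ≤ -(1 / (2 * β)) * ‖(-t) • b + β • b‖ ^ 2 := by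
    apply mul_le_mul_of_nonpos_left hsq
    have : 0 < 1 / (2 * β) := by positivity
    linarith
  linarith
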